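/- Worst-case disturbance realization for negation-free formulas: let φ be negation-free, and for a fixed control sequence let the achievable signals be y_w[τ] = c[τ] + M[τ] w for disturbances w in the convex hull of vertices v_1,...,v_q (block structure so each time's disturbance chosen independently); define y_min[τ]_i = c[τ]_i + min_j (M[τ] v_j)_i. Then inf over admissible w of ρ^φ_{y_w}[t] ≥ ρ^φ_{y_min}[t]; i.e., nonnegativity of robustness at the coordinatewise lower corner certifies robust satisfaction for all disturbance realizations. -/
import Mathlib


/-- Negation-free STL formulas over `p` predicates. Interval bounds carry `a ≤ b`. -/
inductive STL (p : ℕ) : Type where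
  | pred : Fin p → STL p
  | conj : STL p → STL p → STL p
  | disj : STL p → STL p → STL p
  | ev : (a b : ℕ) → a ≤ b → STL p → STL p
  | alw : (a b : ℕ) → a ≤ b → STL p → STL p
  | untl : (a b : ℕ) → a ≤ b → STL p → STL p → STL p

/-- Quantitative semantics (robustness) of negation-free STL. -/
noncomputable def rob {p : ℕ} (y : ℕ → Fin p → ℝ) : STL p → ℕ → ℝ
  | .pred i, t => y t i
  | .conj φ ψ, t => min (rob y φ t) (rob y ψ t)
  | .disj φ ψ, t => max (rob y φ t) (rob y ψ t)
  | .ev a b h φ, t =>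
      (Finset.Icc (t + a) (t + b)).sup' (Finset.nonempty_Icc.mpr (by omega))
        (fun τ => rob y φ τ)
  | .alw a b h φ, t =>
      (Finset.Icc (t + a) (t + b)).inf' (Finset.nonempty_Icc.mpr (by omega))
        (fun τ => rob y φ τ)
  | .untl a b h φ ψ, t =>
      (Finset.Icc (t + a) (t + b)).sup' (Finset.nonempty_Icc.mpr (by omega))
        (fun t' => min (rob y φ t')
          ((insert t (Finset.Icc t t')).inf' (Finset.insert_nonempty _ _)
            (fun t'' => rob y ψ t'')))

theorem rob_mono {p : ℕ} {y z : ℕ → Fin p → ℝ} (h : ∀ τ i, y τ i ≤ z τ i) :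
    ∀ (φ : STL p) (t : ℕ), rob y φ t ≤ rob z φ t := by
  intro φ
  induction φ with
  | pred i => intro t; exact h t i
  | conj φ ψ ih1 ih2 => intro t; exact min_le_min (ih1 t) (ih2 t)
  | disj φ ψ ih1 ih2 => intro t; exact max_le_max (ih1 t) (ih2 t)
  | ev a b hab φ ih =>
      intro t; simp only [rob]
      exact Finset.sup'_mono_fun (fun τ _ => ih τ)
  | alw a b hab φ ih =>
      intro t; simp only [rob]
      exact Finset.le_inf' _ _ (fun b hb => (Finset.inf'_le _ hb).trans (ih b))
  | untl a b hab φ ψ ih1 ih2 =>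
      intro t; simp only [rob]
      refine Finset.sup'_mono_fun (fun t' _ => min_le_min (ih1 t') ?_)
      exact Finset.le_inf' _ _ (fun b hb => (Finset.inf'_le _ hb).trans (ih2 b))

/-- Worst-case disturbance realization for negation-free formulas: if at each
time the achievable signal is `y_w[τ] = c[τ] + M[τ] w[τ]` with `w[τ]` in the
convex hull of vertices `v j` (chosen independently per time step), and
`y_min[τ]ᵢ = c[τ]ᵢ + minⱼ (M[τ] vⱼ)ᵢ` is the coordinatewise lower-corner
signal, then the robustness of any negation-free formula on `y_w` dominates
its robustness on `y_min`; in particular nonnegativity at `y_min` certifies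
robust satisfaction for all disturbance realizations. -/
theorem worst_case_lower_corner {p n q : ℕ} (hq : 0 < q) (φ : STL p)
    (c : ℕ → Fin p → ℝ) (M : ℕ → Matrix (Fin p) (Fin n) ℝ)
    (v : Fin q → Fin n → ℝ) (w : ℕ → Fin n → ℝ)
    (hw : ∀ τ : ℕ, ∃ lam : Fin q → ℝ,
      (∀ j, 0 ≤ lam j) ∧ (∑ j, lam j) = 1 ∧ w τ = ∑ j, lam j • v j)
    (t : ℕ) :
    rob (fun τ i => c τ i +
        Finset.univ.inf' (Finset.univ_nonempty_iff.mpr ⟨⟨0, hq⟩⟩)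
          (fun j => (M τ).mulVec (v j) i)) φ t ≤
      rob (fun τ i => c τ i + (M τ).mulVec (w τ) i) φ t := by
  refine rob_mono (fun τ i => ?_) φ t
  obtain ⟨lam, hnn, hsum, hwτ⟩ := hw τ
  have : (M τ).mulVec (w τ) i = ∑ j, lam j * (M τ).mulVec (v j) i := by
    rw [hwτ]
    simp only [Matrix.mulVec, dotProduct, Finset.sum_apply, Pi.smul_apply,
      smul_eq_mul, Finset.mul_sum, Finset.sum_mul]
    rw [Finset.sum_comm]
    congr 1; ext j; congr 1; ext k; ring
  rw [this]
  gcongr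
  calc Finset.univ.inf' (Finset.univ_nonempty_iff.mpr ⟨⟨0, hq⟩⟩)
        (fun j => (M τ).mulVec (v j) i)
      = ∑ j, lam j * Finset.univ.inf' (Finset.univ_nonempty_iff.mpr ⟨⟨0, hq⟩⟩)
        (fun j => (M τ).mulVec (v j) i) := by
        rw [← Finset.sum_mul, hsum, one_mul]
    _ ≤ ∑ j, lam j * (M τ).mulVec (v j) i := by
        refine Finset.sum_le_sum (fun j _ => ?_)
        exact mul_le_mul_of_nonneg_left
          (Finset.inf'_le _ (Finset.mem_univ j)) (hnn j)
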